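/- arXiv:2303.02030 — 3 statements merged into one kernel-verified Lean document; each statement's English description precedes it below -/
import Mathlib

section
/- If p is an odd prime and q = 4p + 1 is prime, then 2 is a primitive root modulo q; that is, the multiplicative order of 2 modulo q equals q − 1 = 4p. -/
/-!
Since `q = 4p + 1 ≡ 5 (mod 8)`, the residue `2` is not a square mod `q`, so by Euler's criterion
`2 ^ (2p) = -1` and hence `2 ^ (4p) = 1`. The primes dividing `4p` are `2` and `p`; the first gives
`2 ^ (4p / 2) = -1 ≠ 1`, and the second gives `2 ^ 4 = 16 ≠ 1` because `q ≥ 13` does not divide `15`.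
-/

namespace ZMod

theorem pow_div_two_eq_neg_one_of_not_isSquare {p : ℕ} [Fact p.Prime] {a : ZMod p}
    (ha : ¬IsSquare a) : a ^ (p / 2) = -1 := by
  have ha0 : a ≠ 0 := by
    rintro rfl
    exact ha IsSquare.zero
  exact (pow_div_two_eq_neg_one_or_one p ha0).resolve_left
    fun h => ha ((euler_criterion p ha0).mpr h)

theorem two_pow_div_two_eq_neg_one {p : ℕ} [Fact p.Prime] (hp : p % 8 = 3 ∨ p % 8 = 5) :
    (2 : ZMod p) ^ (p / 2) = -1 := by
  refine pow_div_two_eq_neg_one_of_not_isSquare ?_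
  rw [exists_sq_eq_two_iff (by omega)]
  omega

theorem two_pow_four_eq_one_iff (n : ℕ) : (2 : ZMod n) ^ 4 = 1 ↔ n ∣ 15 := by
  rw [← natCast_eq_zero_iff, ← sub_eq_zero]
  norm_num

end ZMod

theorem Nat.Prime.eq_two_or_eq_of_dvd_four_mul {p r : ℕ} (hp : p.Prime) (hr : r.Prime)
    (hrd : r ∣ 4 * p) : r = 2 ∨ r = p := by
  rcases hr.dvd_mul.mp hrd with h4 | hrp
  · exact .inl ((Nat.prime_dvd_prime_iff_eq hr Nat.prime_two).mp (hr.dvd_of_dvd_pow (n := 2) h4))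
  · exact .inr ((Nat.prime_dvd_prime_iff_eq hr hp).mp hrp)

theorem two_primitive_root_mod_4p_add_one (p : ℕ) (hp : p.Prime) (hodd : Odd p)
    (hq : (4 * p + 1).Prime) :
    orderOf (2 : ZMod (4 * p + 1)) = 4 * p := by
  have : Fact (4 * p + 1).Prime := ⟨hq⟩
  have hp3 : 3 ≤ p := by
    have := hp.two_le
    obtain ⟨k, rfl⟩ := hodd
    omega
  have hhalf : (2 : ZMod (4 * p + 1)) ^ (2 * p) = -1 := by
    have h := ZMod.two_pow_div_two_eq_neg_one (p := 4 * p + 1) (by obtain ⟨k, rfl⟩ := hodd; omega)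
    rwa [show (4 * p + 1) / 2 = 2 * p by omega] at h
  have hneg : (-1 : ZMod (4 * p + 1)) ≠ 1 := by
    have : Fact (2 < 4 * p + 1) := ⟨by omega⟩
    exact ZMod.neg_one_ne_one
  refine orderOf_eq_of_pow_and_pow_div_prime (by omega) ?_ fun r hr hrd => ?_
  · have hsq := congrArg (· ^ 2) hhalf
    simp only [← pow_mul, neg_one_sq] at hsq
    rwa [show 2 * p * 2 = 4 * p by ring] at hsq
  rcases hp.eq_two_or_eq_of_dvd_four_mul hr hrd with rfl | hrp
  · rwa [show 4 * p / 2 = 2 * p by omega, hhalf]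
  · rw [hrp, Nat.mul_div_cancel _ hp.pos, Ne, ZMod.two_pow_four_eq_one_iff]
    intro h15
    obtain rfl : p = 3 := by have := Nat.le_of_dvd (by norm_num) h15; omega
    norm_num at h15
end

section
/- There exist a constant C > 0 and a real number x₀ such that for all real x ≥ x₀, the double sum ∑_{m ≤ x} ∑_{n ≤ x} (log m · log n)/[m,n], taken over positive integers m, n ≤ x, satisfies ∑_{m,n ≤ x} (log m · log n)/[m,n] ≤ C · (log x)^5. -/
/-!
With `d = gcd(m, n)`, `m = d a` and `n = d b` one has `[m, n] = d a b`, and `(m, n) ↦ (d, a, b)`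
is injective on `[1, N]²` with image in `[1, N]³`. Hence `∑_{m, n ≤ N} 1/[m, n] ≤ H_N³`, where
`H_N ≤ 1 + log N ≤ 2 log x` is the harmonic number; bounding `log m · log n` by `(log x)²` gives
the constant `8`.
-/

open Finset Real

namespace Nat

def gcdCofactors (p : ℕ × ℕ) : ℕ × ℕ × ℕ :=
  (p.1.gcd p.2, p.1 / p.1.gcd p.2, p.2 / p.1.gcd p.2)

theorem gcdCofactors_injective : Function.Injective gcdCofactors := by
  rintro ⟨m, n⟩ ⟨m', n'⟩ h
  simp only [gcdCofactors, Prod.mk.injEq] at h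
  obtain ⟨hg, hm, hn⟩ := h
  rw [← hg] at hm hn
  exact Prod.ext ((Nat.div_left_inj (gcd_dvd_left m n) (hg ▸ gcd_dvd_left m' n')).mp hm)
    ((Nat.div_left_inj (gcd_dvd_right m n) (hg ▸ gcd_dvd_right m' n')).mp hn)

theorem gcdCofactors_mem_Icc {N m n : ℕ} (hm : m ∈ Icc 1 N) (hn : n ∈ Icc 1 N) :
    gcdCofactors (m, n) ∈ Icc 1 N ×ˢ Icc 1 N ×ˢ Icc 1 N := by
  simp only [gcdCofactors, mem_product, mem_Icc] at hm hn ⊢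
  have hg : 0 < m.gcd n := gcd_pos_of_pos_left n hm.1
  exact ⟨⟨hg, (gcd_le_left n hm.1).trans hm.2⟩,
    ⟨div_pos (gcd_le_left n hm.1) hg, (div_le_self _ _).trans hm.2⟩,
    ⟨div_pos (gcd_le_right (m := m) hn.1) hg, (div_le_self _ _).trans hn.2⟩⟩

theorem lcm_eq_gcd_mul_div_gcd_mul_div_gcd (m n : ℕ) :
    m.lcm n = m.gcd n * (m / m.gcd n) * (n / m.gcd n) := by
  rw [Nat.lcm, Nat.mul_div_assoc m (gcd_dvd_right m n), mul_comm (m.gcd n),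
    Nat.div_mul_cancel (gcd_dvd_left m n)]

end Nat

theorem harmonic_nonneg (n : ℕ) : 0 ≤ harmonic n :=
  harmonic_eq_sum_Icc ▸ sum_nonneg fun i _ => by positivity

theorem sum_inv_lcm_le_harmonic_pow_three (N : ℕ) :
    ∑ m ∈ Icc 1 N, ∑ n ∈ Icc 1 N, ((m.lcm n : ℕ) : ℝ)⁻¹ ≤ (harmonic N : ℝ) ^ 3 := by
  set s := Icc 1 N
  let w : ℕ × ℕ × ℕ → ℝ := fun q => ((q.1 : ℝ) * q.2.1 * q.2.2)⁻¹
  have h_image : (s ×ˢ s).image Nat.gcdCofactors ⊆ s ×ˢ s ×ˢ s :=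
    image_subset_iff.mpr fun _ hp =>
      Nat.gcdCofactors_mem_Icc (mem_product.mp hp).1 (mem_product.mp hp).2
  calc ∑ m ∈ s, ∑ n ∈ s, ((m.lcm n : ℕ) : ℝ)⁻¹
      = ∑ p ∈ s ×ˢ s, w (Nat.gcdCofactors p) := by
        rw [sum_product]
        refine sum_congr rfl fun m _ => sum_congr rfl fun n _ => ?_
        simp only [w, Nat.gcdCofactors, Nat.lcm_eq_gcd_mul_div_gcd_mul_div_gcd m n, Nat.cast_mul]
    _ = ∑ q ∈ (s ×ˢ s).image Nat.gcdCofactors, w q :=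
        (sum_image Nat.gcdCofactors_injective.injOn).symm
    _ ≤ ∑ q ∈ s ×ˢ s ×ˢ s, w q :=
        sum_le_sum_of_subset_of_nonneg h_image fun _ _ _ => by positivity
    _ = (harmonic N : ℝ) ^ 3 := by
        simp only [w, sum_product, mul_inv, ← mul_sum, ← sum_mul, harmonic_eq_sum_Icc]
        push_cast
        ring

theorem harmonic_floor_le_two_mul_log {x : ℝ} (hx : exp 1 ≤ x) :
    (harmonic ⌊x⌋₊ : ℝ) ≤ 2 * log x := by
  have hx₀ : 0 < x := (exp_pos 1).trans_le hx
  have hlog : 1 ≤ log x := by rwa [le_log_iff_exp_le hx₀]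
  have hN : log ⌊x⌋₊ ≤ log x := by
    rcases Nat.eq_zero_or_pos ⌊x⌋₊ with h | h
    · rw [h, Nat.cast_zero, log_zero]
      linarith
    · exact log_le_log (by exact_mod_cast h) (Nat.floor_le hx₀.le)
  linarith [harmonic_le_one_add_log ⌊x⌋₊]

theorem log_natCast_le_log_of_le_floor {x : ℝ} {k : ℕ} (hk : 0 < k) (hkx : k ≤ ⌊x⌋₊) :
    log k ≤ log x :=
  log_le_log (by exact_mod_cast hk) ((Nat.le_floor_iff' hk.ne').mp hkx)

theorem sum_log_mul_log_div_lcm_le :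
    ∃ C : ℝ, 0 < C ∧ ∃ x₀ : ℝ, ∀ x : ℝ, x₀ ≤ x →
      ∑ m ∈ Finset.Icc 1 ⌊x⌋₊, ∑ n ∈ Finset.Icc 1 ⌊x⌋₊,
          Real.log m * Real.log n / (Nat.lcm m n) ≤
        C * Real.log x ^ 5 := by
  refine ⟨8, by norm_num, exp 1, fun x hx => ?_⟩
  have hlog : 0 ≤ log x :=
    zero_le_one.trans <| (le_log_iff_exp_le ((exp_pos 1).trans_le hx)).mpr hx
  have hlog_le : ∀ k ∈ Icc 1 ⌊x⌋₊, log k ≤ log x := fun k hk =>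
    log_natCast_le_log_of_le_floor (mem_Icc.mp hk).1 (mem_Icc.mp hk).2
  calc ∑ m ∈ Icc 1 ⌊x⌋₊, ∑ n ∈ Icc 1 ⌊x⌋₊, log m * log n / (m.lcm n)
      ≤ ∑ m ∈ Icc 1 ⌊x⌋₊, ∑ n ∈ Icc 1 ⌊x⌋₊, log x * log x / (m.lcm n) :=
        sum_le_sum fun m hm => sum_le_sum fun n hn => div_le_div_of_nonneg_right
          (mul_le_mul (hlog_le m hm) (hlog_le n hn) (log_natCast_nonneg n) hlog)
          (Nat.cast_nonneg _)
    _ = log x ^ 2 * ∑ m ∈ Icc 1 ⌊x⌋₊, ∑ n ∈ Icc 1 ⌊x⌋₊, ((m.lcm n : ℕ) : ℝ)⁻¹ := by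
        simp only [mul_sum, div_eq_mul_inv, sq]
    _ ≤ log x ^ 2 * (2 * log x) ^ 3 := by
        gcongr
        exact (sum_inv_lcm_le_harmonic_pow_three _).trans <|
          pow_le_pow_left₀ (Rat.cast_nonneg.mpr (harmonic_nonneg _))
            (harmonic_floor_le_two_mul_log hx) 3
    _ = 8 * log x ^ 5 := by ring
end

section
/- Let x ≥ 1 be a real number, let Q be a real number with 1 ≤ Q ≤ x, and let (a_n)_{n ≥ 1} be a sequence of real numbers. Then ∑_{q ≤ Q} q · ∑_{a=1}^{q} | ∑_{n ≤ x, n ≡ a (mod q)} a_n − (1/q)·∑_{n ≤ x} a_n |² ≤ Q·(10Q + 2πx) · ∑_{n ≤ x} a_n², where q runs over positive integers q ≤ Q, a runs over residues 1 ≤ a ≤ q, and all sums over n ≤ x run over positive integers n ≤ x. -/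
open Finset Real

/-! For each modulus `q` the residue-class sums `S_r` have mean `(1/q) ∑ aₙ`, so
`∑_r |S_r - (1/q) ∑ aₙ|² ≤ ∑_r S_r²`. Each class has at most `x/q + 1` elements, so Cauchy–Schwarz
in each class gives `q ∑_r S_r² ≤ (x + q) ∑ aₙ²`. Summing over `q ≤ Q` yields the bound
`Q (x + Q) ∑ aₙ²`, which is stronger than the stated one. -/

lemma sum_Icc_one_mod_eq_sum_range {M : Type*} [AddCommMonoid M] {q : ℕ} (hq : 0 < q)
    (F : ℕ → M) : ∑ r ∈ Icc 1 q, F (r % q) = ∑ j ∈ range q, F j := by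
  refine sum_nbij' (· % q) (fun j => if j = 0 then q else j)
    (fun r _ => mem_range.2 (Nat.mod_lt r hq)) (fun j hj => ?_) (fun r hr => ?_) (fun j hj => ?_)
    (fun _ _ => rfl)
  · simp only [mem_range, mem_Icc] at hj ⊢
    split <;> omega
  · simp only [mem_Icc] at hr
    obtain rfl | hrq := hr.2.eq_or_lt
    · simp
    · simp [Nat.mod_eq_of_lt hrq, show r ≠ 0 by omega]
  · simp only [mem_range] at hj
    split <;> simp_all [Nat.mod_eq_of_lt]

lemma sum_Icc_sum_filter_mod_eq {M : Type*} [AddCommMonoid M] (s : Finset ℕ) {q : ℕ} (hq : 0 < q)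
    (f : ℕ → M) : ∑ r ∈ Icc 1 q, ∑ n ∈ s with n % q = r % q, f n = ∑ n ∈ s, f n := by
  rw [sum_Icc_one_mod_eq_sum_range hq (fun c => ∑ n ∈ s with n % q = c, f n)]
  exact sum_fiberwise_of_maps_to (fun n _ => mem_range.2 (Nat.mod_lt n hq)) f

lemma card_filter_mod_eq_le (N q c : ℕ) : #{n ∈ Icc 1 N | n % q = c} ≤ N / q + 1 := by
  calc #{n ∈ Icc 1 N | n % q = c} ≤ #(range (N / q + 1)) := by
        refine card_le_card_of_injOn (· / q) (fun n hn => ?_) (fun n hn m hm hnm => ?_)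
        · simp only [coe_filter, mem_Icc, Set.mem_ofPred_eq, coe_range, Set.mem_Iio] at hn ⊢
          exact Nat.lt_succ_of_le (Nat.div_le_div_right hn.1.2)
        · simp only [coe_filter, Set.mem_ofPred_eq] at hn hm
          rw [← Nat.div_add_mod n q, ← Nat.div_add_mod m q, hn.2, hm.2]
          exact congrArg (q * · + c) hnm
    _ = N / q + 1 := card_range _

lemma mul_card_filter_mod_eq_le (N q c : ℕ) : q * #{n ∈ Icc 1 N | n % q = c} ≤ N + q :=
  calc q * #{n ∈ Icc 1 N | n % q = c} ≤ q * (N / q) + q := by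
        simpa [mul_add] using Nat.mul_le_mul_left q (card_filter_mod_eq_le N q c)
    _ ≤ N + q := by gcongr; exact Nat.mul_div_le N q

lemma sum_sq_sub_mean_le_sum_sq {ι K : Type*} [Field K] [LinearOrder K] [IsStrictOrderedRing K]
    (s : Finset ι) (f : ι → K) :
    ∑ i ∈ s, (f i - (∑ j ∈ s, f j) / #s) ^ 2 ≤ ∑ i ∈ s, f i ^ 2 := by
  set T := ∑ j ∈ s, f j
  set m := T / #s
  have hm : #s * m = T := by
    rcases s.eq_empty_or_nonempty with rfl | hs
    · simp [T]
    · exact mul_div_cancel₀ T (by exact_mod_cast hs.card_pos.ne')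
  have hexpand : ∑ i ∈ s, (f i - m) ^ 2 = ∑ i ∈ s, f i ^ 2 - m * T := by
    simp only [sub_sq, sum_add_distrib, sum_sub_distrib, sum_const, nsmul_eq_mul, ← sum_mul,
      ← mul_sum]
    linear_combination m * hm
  have : 0 ≤ m * T := by rw [← hm, mul_left_comm, ← sq]; positivity
  linarith

lemma mul_sum_sq_sum_filter_mod_le (N : ℕ) {q : ℕ} (hq : 0 < q) (a : ℕ → ℝ) :
    q * ∑ r ∈ Icc 1 q, (∑ n ∈ Icc 1 N with n % q = r % q, a n) ^ 2 ≤
      (N + q) * ∑ n ∈ Icc 1 N, a n ^ 2 := by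
  rw [← sum_Icc_sum_filter_mod_eq (Icc 1 N) hq (a · ^ 2), mul_sum, mul_sum]
  refine sum_le_sum fun r _ => ?_
  calc (q : ℝ) * (∑ n ∈ Icc 1 N with n % q = r % q, a n) ^ 2
      ≤ q * (#{n ∈ Icc 1 N | n % q = r % q} * ∑ n ∈ Icc 1 N with n % q = r % q, a n ^ 2) := by
        gcongr; exact sq_sum_le_card_mul_sum_sq
    _ = (q * #{n ∈ Icc 1 N | n % q = r % q} : ℕ) * ∑ n ∈ Icc 1 N with n % q = r % q, a n ^ 2 := by
        push_cast; ring
    _ ≤ (N + q) * ∑ n ∈ Icc 1 N with n % q = r % q, a n ^ 2 := by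
        gcongr; exact_mod_cast mul_card_filter_mod_eq_le N q (r % q)

lemma mul_sum_sq_residue_deviation_le (N : ℕ) {q : ℕ} (hq : 0 < q) (a : ℕ → ℝ) :
    q * ∑ r ∈ Icc 1 q,
        |(∑ n ∈ Icc 1 N with n % q = r % q, a n) - 1 / q * ∑ n ∈ Icc 1 N, a n| ^ 2 ≤
      (N + q) * ∑ n ∈ Icc 1 N, a n ^ 2 := by
  have hmean : 1 / (q : ℝ) * ∑ n ∈ Icc 1 N, a n =
      (∑ r ∈ Icc 1 q, ∑ n ∈ Icc 1 N with n % q = r % q, a n) / #(Icc 1 q) := by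
    rw [sum_Icc_sum_filter_mod_eq _ hq, Nat.card_Icc, add_tsub_cancel_right, one_div_mul_eq_div]
  simp_rw [sq_abs, hmean]
  exact (mul_le_mul_of_nonneg_left (sum_sq_sub_mean_le_sum_sq _ _) q.cast_nonneg).trans
    (mul_sum_sq_sum_filter_mod_le N hq a)

theorem large_sieve_inequality_general (x Q : ℝ) (hx : 1 ≤ x) (hQ1 : 1 ≤ Q)
    (a : ℕ → ℝ) :
    ∑ q ∈ Finset.Icc 1 ⌊Q⌋₊, (q : ℝ) *
        ∑ r ∈ Finset.Icc 1 q,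
          |(∑ n ∈ (Finset.Icc 1 ⌊x⌋₊).filter (fun n => n % q = r % q), a n) -
            (1 / (q : ℝ)) * ∑ n ∈ Finset.Icc 1 ⌊x⌋₊, a n| ^ 2 ≤
      Q * (10 * Q + 2 * Real.pi * x) * ∑ n ∈ Finset.Icc 1 ⌊x⌋₊, a n ^ 2 := by
  set N := ⌊x⌋₊
  set A := ∑ n ∈ Icc 1 N, a n ^ 2
  have hA : 0 ≤ A := sum_nonneg fun n _ => sq_nonneg (a n)
  have hN : (N : ℝ) ≤ x := Nat.floor_le (by linarith)
  have hQ : (⌊Q⌋₊ : ℝ) ≤ Q := Nat.floor_le (by linarith)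
  calc _ ≤ ∑ q ∈ Icc 1 ⌊Q⌋₊, (N + Q) * A := by
        refine sum_le_sum fun q hq => ?_
        have hq' := mem_Icc.1 hq
        refine (mul_sum_sq_residue_deviation_le N (by omega) a).trans ?_
        gcongr
        exact (Nat.cast_le.2 hq'.2).trans hQ
    _ = ⌊Q⌋₊ * ((N + Q) * A) := by simp
    _ ≤ Q * ((x + Q) * A) := by gcongr
    _ ≤ Q * (10 * Q + 2 * π * x) * A := by
        rw [← mul_assoc]
        gcongr Q * ?_ * A
        nlinarith [pi_gt_three]

theorem large_sieve_inequality (x Q : ℝ) (hx : 1 ≤ x) (hQ1 : 1 ≤ Q) (hQx : Q ≤ x)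
    (a : ℕ → ℝ) :
    ∑ q ∈ Finset.Icc 1 ⌊Q⌋₊, (q : ℝ) *
        ∑ r ∈ Finset.Icc 1 q,
          |(∑ n ∈ (Finset.Icc 1 ⌊x⌋₊).filter (fun n => n % q = r % q), a n) -
            (1 / (q : ℝ)) * ∑ n ∈ Finset.Icc 1 ⌊x⌋₊, a n| ^ 2 ≤
      Q * (10 * Q + 2 * Real.pi * x) * ∑ n ∈ Finset.Icc 1 ⌊x⌋₊, a n ^ 2 :=
  large_sieve_inequality_general x Q hx hQ1 a
end
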